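/- arXiv:2411.15649 — 2 statements merged into one kernel-verified Lean document; each statement's English description precedes it below -/
import Mathlib

section
/- Let n ≥ 1, let c be a red-blue coloring of the triples of {1,…,N}, and for u < v let α(u,v) = 1 + the number of edges of the longest red monotone path ending with the pair (u,v). Suppose v_1 < v_2 < ⋯ < v_{2n+1} are vertices such that for each 1 ≤ i ≤ n, α(v_{2i−1}, v_{2i}) = α(v_{2i}, v_{2i+1}) = α(v_{2i−1}, v_{2i+1}), and such that for each 1 ≤ i ≤ n−1, α(v_{2i−1}, v_{2i+1}) ≥ α(v_{2i+1}, v_{2i+2}). Then the map sending j to v_j is a blue copy of I_n, i.e., every edge of I_n is mapped to a blue triple of c. -/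
/-!
Common definitions.

A red-blue coloring of the triples of `{1,…,N}` is modelled as a function
`c : ℕ → ℕ → ℕ → Bool`, where `c u v w = true` means the triple `(u,v,w)`
(with `u < v < w`) is colored red, and `false` means blue.

An `n`-coloring of the pairs of `{1,…,N}` is a function `χ : ℕ → ℕ → Fin n`
(only its values on pairs `u < v` in `{1,…,N}` matter).
-/

/-- `p` (restricted to indices `1,…,k`) is a red monotone path on `k` vertices
inside `{1,…,N}` under the red-blue triple coloring `c`. -/
def IsRedPath (N k : ℕ) (c : ℕ → ℕ → ℕ → Bool) (p : ℕ → ℕ) : Prop :=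
  (∀ i, 1 ≤ i → i ≤ k → 1 ≤ p i ∧ p i ≤ N) ∧
  (∀ i j, 1 ≤ i → i < j → j ≤ k → p i < p j) ∧
  (∀ i, 1 ≤ i → i + 2 ≤ k → c (p i) (p (i + 1)) (p (i + 2)) = true)

/-- There is a red monotone path on `k` vertices inside `{1,…,N}`. -/
def HasRedPath (N k : ℕ) (c : ℕ → ℕ → ℕ → Bool) : Prop :=
  ∃ p : ℕ → ℕ, IsRedPath N k c p

/-- `f` (restricted to indices `1,…,m`) is a blue copy, inside `{1,…,N}` under the
red-blue triple coloring `c`, of the ordered 3-uniform hypergraph on `{1,…,m}`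
with edge relation `E`. -/
def IsBlueCopy (N m : ℕ) (E : ℕ → ℕ → ℕ → Prop) (c : ℕ → ℕ → ℕ → Bool) (f : ℕ → ℕ) : Prop :=
  (∀ i, 1 ≤ i → i ≤ m → 1 ≤ f i ∧ f i ≤ N) ∧
  (∀ i j, 1 ≤ i → i < j → j ≤ m → f i < f j) ∧
  (∀ a b d, E a b d → c (f a) (f b) (f d) = false)

/-- The pair coloring `χ` has a monochromatic triangle inside `{1,…,N}`. -/
def HasMonoTriangle (N n : ℕ) (χ : ℕ → ℕ → Fin n) : Prop :=
  ∃ u v w, 1 ≤ u ∧ u < v ∧ v < w ∧ w ≤ N ∧ χ u v = χ v w ∧ χ u v = χ u w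

/-- The pair coloring `χ` has a monochromatic complete subgraph on `m` vertices
inside `{1,…,N}`. -/
def HasMonoClique (N m n : ℕ) (χ : ℕ → ℕ → Fin n) : Prop :=
  ∃ S : Finset ℕ, S ⊆ Finset.Icc 1 N ∧ S.card = m ∧
    ∃ k : Fin n, ∀ u ∈ S, ∀ v ∈ S, u < v → χ u v = k

/-- The multicolor Ramsey number `r(m;n)`: the least `N` such that every `n`-coloring
of the pairs of `{1,…,N}` contains a monochromatic complete subgraph on `m` vertices. -/
noncomputable def multicolorRamsey (m n : ℕ) : ℕ :=
  sInf {N | ∀ χ : ℕ → ℕ → Fin n, HasMonoClique N m n χ}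

/-- The multicolor Ramsey number `r(3;n)` for triangles: the least `N` such that every
`n`-coloring of the pairs of `{1,…,N}` contains a monochromatic triangle. -/
noncomputable def r3 (n : ℕ) : ℕ :=
  sInf {N | ∀ χ : ℕ → ℕ → Fin n, HasMonoTriangle N n χ}

/-- A member of the family `𝒥ₙ`: a monotone path with `n` jumps. It is an ordered
3-uniform hypergraph on vertex set `{1,…,m}` with edge relation `E` (written on
increasing triples), containing all consecutive triples, together with a jump set
`J ⊆ {2,…,m-1}` of size `n` with no two consecutive elements, satisfying
conditions (1) and (2). -/
structure JumpPath (n : ℕ) where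
  /-- number of vertices -/
  m : ℕ
  /-- edge relation, on increasing triples of `{1,…,m}` -/
  E : ℕ → ℕ → ℕ → Prop
  /-- the jump set -/
  J : Finset ℕ
  three_le : 3 ≤ m
  edges_ordered : ∀ a b d, E a b d → 1 ≤ a ∧ a < b ∧ b < d ∧ d ≤ m
  consec : ∀ i, 1 ≤ i → i + 2 ≤ m → E i (i + 1) (i + 2)
  jumps_subset : J ⊆ Finset.Icc 2 (m - 1)
  jumps_card : J.card = n
  jumps_nonconsec : ∀ v ∈ J, v + 1 ∉ J
  cond1a : ∀ v ∈ J, 3 ≤ v → E (v - 2) (v - 1) (v + 1)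
  cond1b : ∀ v ∈ J, v + 2 ≤ m → E (v - 1) (v + 1) (v + 2)
  cond2 : ∀ v, v - 1 ∈ J → v + 1 ∈ J → E (v - 2) v (v + 2)

/-- The edge relation of the hypergraph `Iₙ` on vertex set `{1,…,2n+1}`. -/
def edgeI (n : ℕ) (a b d : ℕ) : Prop :=
  (1 ≤ a ∧ b = a + 1 ∧ d = a + 2 ∧ d ≤ 2 * n + 1) ∨
  (∃ i, 1 ≤ i ∧ a = 2 * i - 1 ∧ b = 2 * i + 1 ∧ d = 2 * i + 2 ∧ d ≤ 2 * n + 1) ∨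
  (∃ i, 1 ≤ i ∧ a = 2 * i ∧ b = 2 * i + 1 ∧ d = 2 * i + 3 ∧ d ≤ 2 * n + 1) ∨
  (∃ i, 1 ≤ i ∧ a = 2 * i - 1 ∧ b = 2 * i + 1 ∧ d = 2 * i + 3 ∧ d ≤ 2 * n + 1)

/-- The edge relation of the `t`-th power path `Pᵗₘ` on vertex set `{1,…,m}`:
all increasing triples spanning at most `t` consecutive vertices. -/
def edgePow (t m : ℕ) (a b d : ℕ) : Prop :=
  1 ≤ a ∧ a < b ∧ b < d ∧ d ≤ m ∧ d - a ≤ t - 1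

/-- The edge relation of the ordered graph `G_H` associated with a monotone path with
jumps on `{1,…,m}` with jump set `J`: all consecutive pairs `(i, i+1)` together with
the pairs `(v-1, v+1)` for `v ∈ J`. -/
def GEdge (m : ℕ) (J : Finset ℕ) (a b : ℕ) : Prop :=
  (1 ≤ a ∧ b = a + 1 ∧ b ≤ m) ∨ (∃ v ∈ J, a = v - 1 ∧ b = v + 1)

/-- `alphaFn N c u v` is `1` plus the number of edges of the longest red monotone path
inside `{1,…,N}` ending with the pair `(u, v)` (a path on `k` vertices has `k - 2`
edges, so this equals the largest `k - 1` over such paths; a pair `u < v` in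
`{1,…,N}` is itself a path on two vertices with `0` edges). -/
noncomputable def alphaFn (N : ℕ) (c : ℕ → ℕ → ℕ → Bool) (u v : ℕ) : ℕ :=
  sSup {e : ℕ | ∃ k p, IsRedPath N k c p ∧ 2 ≤ k ∧ p (k - 1) = u ∧ p k = v ∧ e = k - 1}

/-- The Ramsey number `R(P_{n+2}, 𝒥ₙ)`: the least `N` such that every red-blue coloring
of the triples of `{1,…,N}` contains a red monotone path on `n+2` vertices or a blue
copy of some member of `𝒥ₙ`. -/
noncomputable def RamseyPathJump (n : ℕ) : ℕ :=
  sInf {N | ∀ c : ℕ → ℕ → ℕ → Bool,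
    HasRedPath N (n + 2) c ∨ ∃ H : JumpPath n, ∃ f, IsBlueCopy N H.m H.E c f}

/-- The Ramsey number `R(P_{n+2}, Iₙ)`. -/
noncomputable def RamseyPathI (n : ℕ) : ℕ :=
  sInf {N | ∀ c : ℕ → ℕ → ℕ → Bool,
    HasRedPath N (n + 2) c ∨ ∃ f, IsBlueCopy N (2 * n + 1) (edgeI n) c f}

/-- The Ramsey number `R(P_{n+2}, Pᵗₘ)` for a power path. -/
noncomputable def RamseyPathPow (n t m : ℕ) : ℕ :=
  sInf {N | ∀ c : ℕ → ℕ → ℕ → Bool,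
    HasRedPath N (n + 2) c ∨ ∃ f, IsBlueCopy N m (edgePow t m) c f}
lemma redpath_le (N k : ℕ) (c : ℕ → ℕ → ℕ → Bool) (p : ℕ → ℕ)
    (h : IsRedPath N k c p) : ∀ i, 1 ≤ i → i ≤ k → i ≤ p i := by
  intro i
  induction i with
  | zero => omega
  | succ i ih =>
    intro _ hik
    by_cases hi : i = 0
    · subst hi; exact (h.1 1 le_rfl hik).1
    · have h1 := ih (by omega) (by omega)
      have h2 := h.2.1 i (i+1) (by omega) (by omega) hik
      omega

lemma one_mem_alphaSet (N : ℕ) (c : ℕ → ℕ → ℕ → Bool) (u v : ℕ)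
    (hu : 1 ≤ u) (huv : u < v) (hv : v ≤ N) :
    1 ∈ {e : ℕ | ∃ k p, IsRedPath N k c p ∧ 2 ≤ k ∧ p (k-1) = u ∧ p k = v ∧ e = k-1} := by
  refine ⟨2, fun i => if i = 1 then u else v, ⟨?_, ?_, ?_⟩, le_rfl, by norm_num, by norm_num, rfl⟩
  · intro i h1 h2
    by_cases hi : i = 1 <;> simp [hi] <;> omega
  · intro i j h1 hij hj
    have hi1 : i = 1 := by omega
    have hj2 : j = 2 := by omega
    subst hi1; subst hj2
    norm_num; exact huv
  · intro i h1 h2; omega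

lemma alphaSet_bdd (N : ℕ) (c : ℕ → ℕ → ℕ → Bool) (u v : ℕ) :
    BddAbove {e : ℕ | ∃ k p, IsRedPath N k c p ∧ 2 ≤ k ∧ p (k-1) = u ∧ p k = v ∧ e = k-1} := by
  refine ⟨N, fun e he => ?_⟩
  obtain ⟨k, p, hp, hk, _, _, rfl⟩ := he
  have hle := redpath_le N k c p hp k (by omega) le_rfl
  have := (hp.1 k (by omega) le_rfl).2
  omega

lemma alpha_lt (N : ℕ) (c : ℕ → ℕ → ℕ → Bool) (u v w : ℕ)
    (hu : 1 ≤ u) (huv : u < v) (hvw : v < w) (hw : w ≤ N)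
    (hc : c u v w = true) : alphaFn N c u v < alphaFn N c v w := by
  have hne : Set.Nonempty {e : ℕ | ∃ k p, IsRedPath N k c p ∧ 2 ≤ k ∧ p (k-1) = u ∧ p k = v ∧ e = k-1} :=
    ⟨1, one_mem_alphaSet N c u v hu huv (by omega)⟩
  have hmem : alphaFn N c u v ∈ {e : ℕ | ∃ k p, IsRedPath N k c p ∧ 2 ≤ k ∧ p (k-1) = u ∧ p k = v ∧ e = k-1} :=
    Nat.sSup_mem hne (alphaSet_bdd N c u v)
  obtain ⟨k, p, hp, hk2, hku, hkv, he⟩ := hmem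
  set q : ℕ → ℕ := fun i => if i ≤ k then p i else w with hq
  have hmem2 : alphaFn N c u v + 1 ∈
      {e : ℕ | ∃ k p, IsRedPath N k c p ∧ 2 ≤ k ∧ p (k-1) = v ∧ p k = w ∧ e = k-1} := by
    refine ⟨k+1, q, ⟨?_, ?_, ?_⟩, by omega, ?_, ?_, by omega⟩
    · intro i h1 h2
      by_cases hik : i ≤ k
      · simp only [hq, hik, if_pos]; exact hp.1 i h1 hik
      · simp only [hq, hik, if_neg, if_false]; omega
    · intro i j h1 hij hj
      by_cases hjk : j ≤ k
      · simp only [hq, show i ≤ k by omega, hjk, if_pos]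
        exact hp.2.1 i j h1 hij hjk
      · have hik : i ≤ k := by omega
        simp only [hq, hik, if_pos, hjk, if_neg, if_false]
        have hik2 : p i ≤ p k := by
          rcases eq_or_lt_of_le hik with h | h
          · subst h; exact le_rfl
          · exact (hp.2.1 i k h1 h le_rfl).le
        omega
    · intro i h1 h2
      by_cases h3 : i + 2 ≤ k
      · simp only [hq, show i ≤ k by omega, show i+1 ≤ k by omega, h3, if_pos]
        exact hp.2.2 i h1 h3
      · have hi2 : i + 2 = k + 1 := by omega
        simp only [hq, show i ≤ k by omega, show i+1 ≤ k by omega, if_pos,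
          show ¬ (i + 2 ≤ k) by omega, if_neg, if_false]
        have e1 : p i = u := by rw [show i = k - 1 by omega]; exact hku
        have e2 : p (i+1) = v := by rw [show i + 1 = k by omega]; exact hkv
        rw [e1, e2]; exact hc
    · simp only [hq, Nat.add_sub_cancel, le_refl, if_pos]; exact hkv
    · simp only [hq, show ¬ (k + 1 ≤ k) by omega, if_neg, if_false]
  calc alphaFn N c u v < alphaFn N c u v + 1 := Nat.lt_succ_self _
    _ ≤ alphaFn N c v w := le_csSup (alphaSet_bdd N c v w) hmem2

lemma blue_of_alpha_le (N : ℕ) (c : ℕ → ℕ → ℕ → Bool) (u v w : ℕ)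
    (hu : 1 ≤ u) (h2 : u < v) (h3 : v < w) (h4 : w ≤ N)
    (h5 : alphaFn N c v w ≤ alphaFn N c u v) : c u v w = false := by
  by_contra h
  simp only [Bool.not_eq_false] at h
  have := alpha_lt N c u v w hu h2 h3 h4 h
  omega

/-- If `v₁ < ⋯ < v_{2n+1}` in `{1,…,N}` satisfy
`α(v_{2i-1},v_{2i}) = α(v_{2i},v_{2i+1}) = α(v_{2i-1},v_{2i+1})` for `1 ≤ i ≤ n` and
`α(v_{2i-1},v_{2i+1}) ≥ α(v_{2i+1},v_{2i+2})` for `1 ≤ i ≤ n-1`, then `j ↦ v_j` is a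
blue copy of `Iₙ`. -/
theorem blue_copy_of_alpha (n N : ℕ) (hn : 1 ≤ n) (c : ℕ → ℕ → ℕ → Bool) (v : ℕ → ℕ)
    (hrange : ∀ i, 1 ≤ i → i ≤ 2 * n + 1 → 1 ≤ v i ∧ v i ≤ N)
    (hmono : ∀ i j, 1 ≤ i → i < j → j ≤ 2 * n + 1 → v i < v j)
    (heq : ∀ i, 1 ≤ i → i ≤ n →
      alphaFn N c (v (2 * i - 1)) (v (2 * i)) = alphaFn N c (v (2 * i)) (v (2 * i + 1)) ∧
      alphaFn N c (v (2 * i - 1)) (v (2 * i)) = alphaFn N c (v (2 * i - 1)) (v (2 * i + 1)))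
    (hge : ∀ i, 1 ≤ i → i ≤ n - 1 →
      alphaFn N c (v (2 * i + 1)) (v (2 * i + 2)) ≤
        alphaFn N c (v (2 * i - 1)) (v (2 * i + 1))) :
    IsBlueCopy N (2 * n + 1) (edgeI n) c v := by

  refine ⟨hrange, hmono, ?_⟩
  intro a b d hE
  have key : ∀ a b d : ℕ, 1 ≤ a → a < b → b < d → d ≤ 2*n+1 →
      alphaFn N c (v b) (v d) ≤ alphaFn N c (v a) (v b) → c (v a) (v b) (v d) = false := by
    intro a b d h1 h2 h3 h4 h5
    exact blue_of_alpha_le N c (v a) (v b) (v d)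
      (hrange a h1 (by omega)).1 (hmono a b h1 h2 (by omega))
      (hmono b d (by omega) h3 h4) (hrange d (by omega) h4).2 h5
  rcases hE with ⟨ha, hb, hd, hle⟩ | ⟨i, hi, ha, hb, hd, hle⟩ | ⟨i, hi, ha, hb, hd, hle⟩ |
    ⟨i, hi, ha, hb, hd, hle⟩
  · -- consecutive triple
    rcases Nat.even_or_odd a with ⟨j, hj⟩ | ⟨j, hj⟩
    · -- a = 2j even, j ≥ 1
      have hj1 : 1 ≤ j := by omega
      have hjn1 : j ≤ n - 1 := by omega
      have hjn : j ≤ n := by omega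
      have h1 := (heq j hj1 hjn).1
      have h2 := (heq j hj1 hjn).2
      have h3 := hge j hj1 hjn1
      apply key a b d ha (by omega) (by omega) hle
      rw [show a = 2*j by omega, show b = 2*j+1 by omega, show d = 2*j+2 by omega]
      omega
    · -- a = 2j+1 odd, set i = j+1
      have hin : j + 1 ≤ n := by omega
      have h1 := (heq (j+1) (by omega) hin).1
      rw [show 2*(j+1)+1 = 2*j+3 by omega, show 2*(j+1)-1 = 2*j+1 by omega,
        show 2*(j+1) = 2*j+2 by omega] at h1
      apply key a b d ha (by omega) (by omega) hle
      rw [show a = 2*j+1 by omega, show b = 2*j+2 by omega, show d = 2*j+3 by omega]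
      omega
  · have hin1 : i ≤ n - 1 := by omega
    have h3 := hge i hi hin1
    apply key a b d (by omega) (by omega) (by omega) hle
    rw [ha, hb, hd]
    omega
  · have hin1 : i ≤ n - 1 := by omega
    have hin : i ≤ n := by omega
    have h1 := (heq i hi hin).1
    have h2 := (heq i hi hin).2
    have h3 := hge i hi hin1
    have h4 := (heq (i+1) (by omega) (by omega)).2
    rw [show 2*(i+1)+1 = 2*i+3 by omega, show 2*(i+1)-1 = 2*i+1 by omega,
      show 2*(i+1) = 2*i+2 by omega] at h4
    have h5 := (heq (i+1) (by omega) (by omega)).1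
    rw [show 2*(i+1)+1 = 2*i+3 by omega, show 2*(i+1)-1 = 2*i+1 by omega,
      show 2*(i+1) = 2*i+2 by omega] at h5
    apply key a b d (by omega) (by omega) (by omega) hle
    rw [ha, hb, hd]
    omega
  · have hin1 : i ≤ n - 1 := by omega
    have h3 := hge i hi hin1
    have h4 := (heq (i+1) (by omega) (by omega)).2
    have h5 := (heq (i+1) (by omega) (by omega)).1
    rw [show 2*(i+1)+1 = 2*i+3 by omega, show 2*(i+1)-1 = 2*i+1 by omega,
      show 2*(i+1) = 2*i+2 by omega] at h4 h5
    apply key a b d (by omega) (by omega) (by omega) hle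
    rw [ha, hb, hd]
    omega
end

section
/- Let m, n ≥ 3, let χ be a coloring of the pairs of {1,…,N} with n colors containing no monochromatic complete subgraph on m vertices, and color each triple (u,v,w) with u < v < w blue if χ(u,v) ≥ χ(v,w) and red otherwise. Then this red-blue coloring of the triples of {1,…,N} contains no blue copy of the (m+1)-th power path P^{m+1}_{mn}. -/
/-- If `m, n ≥ 3` and `χ` is an `n`-coloring of the pairs of `{1,…,N}`
with no monochromatic complete subgraph on `m` vertices, and a triple `(u,v,w)` is
colored blue iff `χ(u,v) ≥ χ(v,w)` (red otherwise), then the resulting triple coloring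
has no blue copy of the `(m+1)`-th power path `P^{m+1}_{mn}`. -/
theorem no_blue_power_path (m n N : ℕ) (hm : 3 ≤ m) (hn : 3 ≤ n) (χ : ℕ → ℕ → Fin n)
    (hχ : ¬ HasMonoClique N m n χ) :
    ∀ f : ℕ → ℕ,
      ¬ IsBlueCopy N (m * n) (edgePow (m + 1) (m * n))
        (fun u v w => decide (χ u v < χ v w)) f := by
  intro f hf
  obtain ⟨hrange, hmono, hblue⟩ := hf
  apply hχ
  classical
  have hmn : 9 ≤ m * n := by nlinarith
  set M := m * n with hM
  -- blue edges give inequalities on χ values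
  have hb : ∀ a b d : ℕ, 1 ≤ a → a < b → b < d → d ≤ M → d - a ≤ m →
      (χ (f b) (f d) : ℕ) ≤ (χ (f a) (f b) : ℕ) := by
    intro a b d h1 h2 h3 h4 h5
    have h6 := hblue a b d ⟨h1, h2, h3, h4, by omega⟩
    have h7 : ¬ (χ (f a) (f b) < χ (f b) (f d)) := by simpa using h6
    exact Fin.le_def.mp (not_lt.mp h7)
  -- the padded sequence of consecutive pair colors
  let C : ℕ → ℕ := fun j =>
    if j = 0 then n - 1 else if j ≤ M - 1 then (χ (f j) (f (j+1)) : ℕ) else 0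
  have hC0 : C 0 = n - 1 := by simp [C]
  have hCmid : ∀ j, 1 ≤ j → j ≤ M - 1 → C j = (χ (f j) (f (j+1)) : ℕ) := by
    intro j h1 h2
    show (if j = 0 then n - 1 else if j ≤ M - 1 then (χ (f j) (f (j+1)) : ℕ) else 0) = _
    rw [if_neg (by omega), if_pos h2]
  have hCtop : ∀ j, M - 1 < j → C j = 0 := by
    intro j h2
    show (if j = 0 then n - 1 else if j ≤ M - 1 then (χ (f j) (f (j+1)) : ℕ) else 0) = _
    rw [if_neg (by omega), if_neg (by omega)]
  have hCle : ∀ j, C j ≤ n - 1 := by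
    intro j
    rcases Nat.eq_zero_or_pos j with rfl | hj
    · omega
    · by_cases h2 : j ≤ M - 1
      · rw [hCmid j hj h2]
        have := (χ (f j) (f (j+1))).is_lt
        omega
      · rw [hCtop j (by omega)]; omega
  have hstep : ∀ j, C (j+1) ≤ C j := by
    intro j
    rcases Nat.eq_zero_or_pos j with rfl | hj
    · rw [hC0]; exact hCle 1
    · by_cases h2 : j + 1 ≤ M - 1
      · rw [hCmid (j+1) (by omega) h2, hCmid j (by omega) (by omega)]
        exact hb j (j+1) (j+2) (by omega) (by omega) (by omega) (by omega) (by omega)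
      · rw [hCtop (j+1) (by omega)]
        exact Nat.zero_le _
  have hanti : ∀ a b : ℕ, a ≤ b → C b ≤ C a := by
    intro a b hab
    induction b with
    | zero =>
      have : a = 0 := by omega
      subst this; exact le_rfl
    | succ s ih =>
      rcases Nat.lt_or_ge a (s+1) with h | h
      · exact le_trans (hstep s) (ih (by omega))
      · have : a = s + 1 := by omega
        subst this; exact le_rfl
  -- find a constant block of length m+1
  have hdesc : ∃ t, t < n ∧ C (t*m) = C ((t+1)*m) := by
    by_contra hne
    push_neg at hne
    have hlt : ∀ t, t < n → C ((t+1)*m) < C (t*m) := by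
      intro t ht
      have h1 : C ((t+1)*m) ≤ C (t*m) := hanti _ _ (Nat.mul_le_mul (by omega) le_rfl)
      have h2 := hne t ht
      omega
    have key : ∀ t, t ≤ n → C (t*m) + t ≤ n - 1 := by
      intro t
      induction t with
      | zero =>
        intro _
        rw [Nat.zero_mul, hC0]
        omega
      | succ s ih =>
        intro hs
        have h1 : C ((s+1)*m) < C (s*m) := hlt s (by omega)
        have h2 := ih (by omega)
        omega
    have := key n le_rfl
    omega
  obtain ⟨t, htn, heq⟩ := hdesc
  set i := t * m with hi
  have h2m : (t+1) * m = i + m := by rw [hi]; ring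
  have him : i + m ≤ M := by
    have h1 : (t+1) * m ≤ n * m := Nat.mul_le_mul (by omega) le_rfl
    have h3 : n * m = M := by rw [hM]; ring
    omega
  have heq' : C (i + m) = C i := by rw [← h2m]; exact heq.symm
  have hblock : ∀ j, i ≤ j → j ≤ i + m → C j = C i := by
    intro j h1 h2
    have a1 := hanti i j h1
    have a2 := hanti j (i+m) h2
    omega
  have hklt : C i < n := by
    have := hCle i
    omega
  -- monochromatic clique on f '' {i+1, …, i+m}
  refine ⟨(Finset.Icc (i+1) (i+m)).image f, ?_, ?_, ⟨⟨C i, hklt⟩, ?_⟩⟩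
  · intro x hx
    simp only [Finset.mem_image, Finset.mem_Icc] at hx ⊢
    obtain ⟨a, ⟨ha1, ha2⟩, rfl⟩ := hx
    exact hrange a (by omega) (by omega)
  · rw [Finset.card_image_of_injOn, Nat.card_Icc]
    · omega
    · intro a ha b hb' hfe
      simp only [Finset.coe_Icc, Set.mem_Icc] at ha hb'
      by_contra hne
      rcases Nat.lt_or_ge a b with h | h
      · have := hmono a b (by omega) h (by omega); omega
      · have := hmono b a (by omega) (by omega) (by omega); omega
  · intro u hu v hv huv
    simp only [Finset.mem_image, Finset.mem_Icc] at hu hv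
    obtain ⟨a, ⟨ha1, ha2⟩, rfl⟩ := hu
    obtain ⟨b, ⟨hb1, hb2⟩, rfl⟩ := hv
    have hab : a < b := by
      by_contra h
      rcases Nat.lt_or_ge b a with h' | h'
      · have := hmono b a (by omega) h' (by omega); omega
      · have hba : a = b := by omega
        subst hba; omega
    apply Fin.ext
    show (χ (f a) (f b) : ℕ) = C i
    have hupper : (χ (f a) (f b) : ℕ) ≤ C i := by
      by_cases h2 : 2 ≤ a
      · have h3 := hb (a-1) a b (by omega) (by omega) hab (by omega) (by omega)
        have h4 : C (a-1) = (χ (f (a-1)) (f (a-1+1)) : ℕ) := hCmid (a-1) (by omega) (by omega)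
        have h5 : a - 1 + 1 = a := by omega
        rw [h5] at h4
        rw [← hblock (a-1) (by omega) (by omega), h4]
        exact h3
      · have hi0 : i = 0 := by omega
        have h6 : C i = n - 1 := by rw [hi0, hC0]
        have := (χ (f a) (f b)).is_lt
        omega
    have hlower : C i ≤ (χ (f a) (f b) : ℕ) := by
      by_cases h2 : b ≤ M - 1
      · have h3 := hb a b (b+1) (by omega) hab (by omega) (by omega) (by omega)
        have h4 := hCmid b (by omega) h2
        have h5 := hblock b (by omega) hb2
        omega
      · have h4 : C b = 0 := hCtop b (by omega)
        have h5 := hblock b (by omega) hb2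
        omega
    omega
end
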